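/- Let d = 4k where k ≥ 1 is an integer. For all natural numbers l, m with 0 ≤ l, m < d and (l, m) ≠ (0, 0), set O = X^l Z^m. If both l ∈ {0, 2k} and m ∈ {0, 2k}, then (tr O²)² = d² and |tr O⁴| = d. Otherwise, if both l ∈ {0, k, 2k, 3k} and m ∈ {0, k, 2k, 3k}, then tr O² = 0 and |tr O⁴| = d. In all remaining cases, tr O² = 0 and tr O⁴ = 0. -/

import Mathlib

/-!
The clock and shift matrices satisfy `Z^b X^a = ζ^(ab) X^a Z^b`, so the Weyl operator
`O = X^l Z^m` has powers `O^n = ζ^(C(n,2) l m) X^(nl) Z^(nm)`. The trace of `X^a Z^b` is `d` when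
`d ∣ a` and `d ∣ b` and `0` otherwise (off the diagonal when `d ∤ a`, a vanishing geometric sum of
roots of unity when `d ∤ b`). Hence `tr O^n` is `0` unless `d ∣ nl` and `d ∣ nm`, and then has
modulus `d`. For `d = 4k` and `l, m < d` these conditions with `n = 2` and `n = 4` say exactly
`l, m ∈ {0, 2k}` and `l, m ∈ {0, k, 2k, 3k}`; for `n = 2` the phase `ζ^(lm)` squares to `1`
because `d ∣ 2l`.
-/

/-- `ζ = exp(2πi/d)`, a primitive `d`-th root of unity. -/
noncomputable def zeta (d : ℕ) : ℂ := Complex.exp (2 * Real.pi * Complex.I / d)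

/-- The qudit shift matrix `X`: `X j k = 1` if `j = k + 1`, else `0`. -/
def pauliX (d : ℕ) : Matrix (ZMod d) (ZMod d) ℂ :=
  Matrix.of fun j k => if j = k + 1 then 1 else 0

/-- The qudit clock matrix `Z`: diagonal with `Z j j = ζ^j`. -/
noncomputable def pauliZ (d : ℕ) : Matrix (ZMod d) (ZMod d) ℂ :=
  Matrix.of fun j k => if j = k then zeta d ^ j.val else 0

theorem zeta_isPrimitiveRoot (d : ℕ) [NeZero d] : IsPrimitiveRoot (zeta d) d :=
  Complex.isPrimitiveRoot_exp d (NeZero.ne d)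

theorem norm_zeta (d : ℕ) : ‖zeta d‖ = 1 := by
  simp [zeta, Complex.norm_exp]

section

variable {d : ℕ} [NeZero d]

theorem zeta_pow_eq_zeta_pow_iff {m n : ℕ} : zeta d ^ m = zeta d ^ n ↔ (m : ZMod d) = n := by
  have h := zeta_isPrimitiveRoot d
  rw [(h.isOfFinOrder (NeZero.ne d)).pow_eq_pow_iff_modEq, ← h.eq_orderOf,
    ZMod.natCast_eq_natCast_iff]

theorem zeta_pow_mul_val_add (a b : ℕ) (k : ZMod d) :
    zeta d ^ (b * (k + a).val) = zeta d ^ (a * b) * zeta d ^ (b * k.val) := by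
  rw [← pow_add, zeta_pow_eq_zeta_pow_iff]
  push_cast [ZMod.natCast_zmod_val]
  ring

theorem pauliX_pow_apply (a : ℕ) (j k : ZMod d) :
    (pauliX d ^ a) j k = if j = k + a then 1 else 0 := by
  induction a generalizing k with
  | zero => simp [Matrix.one_apply]
  | succ a ih =>
    rw [pow_succ, Matrix.mul_apply, Finset.sum_eq_single (k + 1)]
    · rw [ih, pauliX, Matrix.of_apply, if_pos rfl, mul_one, Nat.cast_succ, add_assoc,
        add_comm 1]
    · intro i _ hi
      simp [pauliX, hi]
    · simp

theorem pauliZ_pow (b : ℕ) :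
    pauliZ d ^ b = Matrix.diagonal fun j => zeta d ^ (b * j.val) := by
  have hZ : pauliZ d = Matrix.diagonal fun j => zeta d ^ j.val := by
    ext j k
    by_cases h : j = k <;> simp [pauliZ, Matrix.diagonal, h]
  simp only [hZ, Matrix.diagonal_pow, Pi.pow_def, ← pow_mul, mul_comm]

theorem pauliX_pow_mul_pauliZ_pow_apply (a b : ℕ) (j k : ZMod d) :
    (pauliX d ^ a * pauliZ d ^ b) j k = if j = k + a then zeta d ^ (b * k.val) else 0 := by
  simp [pauliZ_pow, Matrix.mul_diagonal, pauliX_pow_apply, ite_mul]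

theorem pauliZ_pow_mul_pauliX_pow (a b : ℕ) :
    pauliZ d ^ b * pauliX d ^ a = zeta d ^ (a * b) • (pauliX d ^ a * pauliZ d ^ b) := by
  ext j k
  rw [Matrix.smul_apply, pauliX_pow_mul_pauliZ_pow_apply, pauliZ_pow, Matrix.diagonal_mul,
    pauliX_pow_apply]
  split_ifs with h
  · rw [h, zeta_pow_mul_val_add, smul_eq_mul, mul_one]
  · simp

theorem pauliX_pow_mul_pauliZ_pow_pow (a b n : ℕ) :
    (pauliX d ^ a * pauliZ d ^ b) ^ n =
      zeta d ^ (n.choose 2 * (a * b)) • (pauliX d ^ (n * a) * pauliZ d ^ (n * b)) := by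
  induction n with
  | zero => simp
  | succ n ih =>
    rw [pow_succ, ih, Matrix.smul_mul, mul_assoc, ← mul_assoc (pauliZ d ^ (n * b)),
      pauliZ_pow_mul_pauliX_pow, Matrix.smul_mul, Matrix.mul_smul, smul_smul, ← pow_add]
    congr 1
    · rw [Nat.choose_succ_succ', Nat.choose_one_right]
      ring_nf
    · simp only [add_one_mul, pow_add, mul_assoc]

theorem sum_zeta_pow_mul_val (b : ℕ) :
    ∑ j : ZMod d, zeta d ^ (b * j.val) = if d ∣ b then (d : ℂ) else 0 := by
  have hrange : ∑ j : ZMod d, zeta d ^ (b * j.val) = ∑ i ∈ Finset.range d, (zeta d ^ b) ^ i := by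
    obtain ⟨n, rfl⟩ := Nat.exists_eq_succ_of_ne_zero (NeZero.ne d)
    -- `ZMod (n + 1)` is `Fin (n + 1)` by definition, with `ZMod.val = Fin.val`
    simp only [pow_mul]
    exact Fin.sum_univ_eq_sum_range (fun i => (zeta (n + 1) ^ b) ^ i) (n + 1)
  rw [hrange]
  split_ifs with hb
  · simp [(zeta_isPrimitiveRoot d).pow_eq_one_iff_dvd b |>.2 hb]
  · have hne : zeta d ^ b ≠ 1 := mt ((zeta_isPrimitiveRoot d).pow_eq_one_iff_dvd b).1 hb
    rw [geom_sum_eq hne, ← pow_mul, mul_comm, pow_mul, (zeta_isPrimitiveRoot d).pow_eq_one,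
      one_pow, sub_self, zero_div]

theorem trace_pauliX_pow_mul_pauliZ_pow (a b : ℕ) :
    (pauliX d ^ a * pauliZ d ^ b).trace = if d ∣ a ∧ d ∣ b then (d : ℂ) else 0 := by
  simp only [Matrix.trace, Matrix.diag_apply, pauliX_pow_mul_pauliZ_pow_apply, left_eq_add,
    ZMod.natCast_eq_zero_iff]
  by_cases ha : d ∣ a
  · simp [ha, sum_zeta_pow_mul_val]
  · simp [ha]

theorem trace_pauliX_pow_mul_pauliZ_pow_pow (a b n : ℕ) :
    ((pauliX d ^ a * pauliZ d ^ b) ^ n).trace =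
      zeta d ^ (n.choose 2 * (a * b)) * if d ∣ n * a ∧ d ∣ n * b then (d : ℂ) else 0 := by
  rw [pauliX_pow_mul_pauliZ_pow_pow, Matrix.trace_smul, trace_pauliX_pow_mul_pauliZ_pow,
    smul_eq_mul]

theorem trace_pauliX_pow_mul_pauliZ_pow_pow_eq_zero {a b n : ℕ}
    (h : ¬(d ∣ n * a ∧ d ∣ n * b)) : ((pauliX d ^ a * pauliZ d ^ b) ^ n).trace = 0 := by
  rw [trace_pauliX_pow_mul_pauliZ_pow_pow, if_neg h, mul_zero]

theorem norm_trace_pauliX_pow_mul_pauliZ_pow_pow {a b n : ℕ} (ha : d ∣ n * a) (hb : d ∣ n * b) :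
    ‖((pauliX d ^ a * pauliZ d ^ b) ^ n).trace‖ = d := by
  rw [trace_pauliX_pow_mul_pauliZ_pow_pow, if_pos ⟨ha, hb⟩, norm_mul, norm_pow, norm_zeta,
    one_pow, one_mul, Complex.norm_natCast]

theorem trace_pauliX_pow_mul_pauliZ_pow_sq_sq {a b : ℕ} (ha : d ∣ 2 * a) (hb : d ∣ 2 * b) :
    ((pauliX d ^ a * pauliZ d ^ b) ^ 2).trace ^ 2 = (d : ℂ) ^ 2 := by
  have h2ab : d ∣ Nat.choose 2 2 * (a * b) * 2 := by
    rw [Nat.choose_self, one_mul, mul_comm, ← mul_assoc]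
    exact ha.mul_right b
  rw [trace_pauliX_pow_mul_pauliZ_pow_pow, if_pos ⟨ha, hb⟩, mul_pow, ← pow_mul,
    (zeta_isPrimitiveRoot d).pow_eq_one_iff_dvd _ |>.2 h2ab, one_mul]

end

theorem four_mul_dvd_two_mul_iff {k x : ℕ} (hx : x < 4 * k) :
    4 * k ∣ 2 * x ↔ x = 0 ∨ x = 2 * k := by
  constructor
  · rintro ⟨c, hc⟩
    have hc2 : c < 2 := by nlinarith
    interval_cases c <;> omega
  · rintro (rfl | rfl)
    · simp
    · exact ⟨1, by ring⟩

theorem four_mul_dvd_four_mul_iff {k x : ℕ} (hx : x < 4 * k) :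
    4 * k ∣ 4 * x ↔ x = 0 ∨ x = k ∨ x = 2 * k ∨ x = 3 * k := by
  rw [Nat.mul_dvd_mul_iff_left four_pos]
  constructor
  · rintro ⟨c, rfl⟩
    have hc4 : c < 4 := lt_of_mul_lt_mul_left (a := k) (by linarith) (Nat.zero_le k)
    interval_cases c <;> simp [mul_comm]
  · rintro (rfl | rfl | rfl | rfl) <;> simp

theorem trace_sq_fourth_of_four_mul_general (d k : ℕ) [NeZero d] (hd : d = 4 * k)
    (l m : ℕ) (hl : l < d) (hm : m < d) :
    (((l = 0 ∨ l = 2 * k) ∧ (m = 0 ∨ m = 2 * k)) →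
        (((pauliX d ^ l * pauliZ d ^ m) ^ 2).trace ^ 2 = (d : ℂ) ^ 2 ∧
         ‖((pauliX d ^ l * pauliZ d ^ m) ^ 4).trace‖ = d)) ∧
    ((¬((l = 0 ∨ l = 2 * k) ∧ (m = 0 ∨ m = 2 * k)) ∧
      (l = 0 ∨ l = k ∨ l = 2 * k ∨ l = 3 * k) ∧
      (m = 0 ∨ m = k ∨ m = 2 * k ∨ m = 3 * k)) →
        (((pauliX d ^ l * pauliZ d ^ m) ^ 2).trace = 0 ∧
         ‖((pauliX d ^ l * pauliZ d ^ m) ^ 4).trace‖ = d)) ∧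
    (¬((l = 0 ∨ l = k ∨ l = 2 * k ∨ l = 3 * k) ∧
       (m = 0 ∨ m = k ∨ m = 2 * k ∨ m = 3 * k)) →
        (((pauliX d ^ l * pauliZ d ^ m) ^ 2).trace = 0 ∧
         ((pauliX d ^ l * pauliZ d ^ m) ^ 4).trace = 0)) := by
  subst hd
  have h2l := four_mul_dvd_two_mul_iff hl
  have h2m := four_mul_dvd_two_mul_iff hm
  have h4l := four_mul_dvd_four_mul_iff hl
  have h4m := four_mul_dvd_four_mul_iff hm
  refine ⟨fun h => ⟨?_, ?_⟩, fun h => ⟨?_, ?_⟩, fun h => ⟨?_, ?_⟩⟩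
  · exact trace_pauliX_pow_mul_pauliZ_pow_sq_sq (h2l.2 h.1) (h2m.2 h.2)
  · exact norm_trace_pauliX_pow_mul_pauliZ_pow_pow (h4l.2 (by omega)) (h4m.2 (by omega))
  · exact trace_pauliX_pow_mul_pauliZ_pow_pow_eq_zero (by rw [h2l, h2m]; exact h.1)
  · exact norm_trace_pauliX_pow_mul_pauliZ_pow_pow (h4l.2 h.2.1) (h4m.2 h.2.2)
  · refine trace_pauliX_pow_mul_pauliZ_pow_pow_eq_zero fun ⟨hl2, hm2⟩ => h ?_
    have := h2l.1 hl2
    have := h2m.1 hm2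
    omega
  · exact trace_pauliX_pow_mul_pauliZ_pow_pow_eq_zero (by rwa [h4l, h4m])

/-- Let `d = 4k` with `k ≥ 1`. For `0 ≤ l, m < d` with
`(l, m) ≠ (0, 0)` and `O = X^l Z^m`: if both `l ∈ {0, 2k}` and `m ∈ {0, 2k}` then
`(tr O²)² = d²` and `|tr O⁴| = d`; otherwise if both `l ∈ {0, k, 2k, 3k}` and
`m ∈ {0, k, 2k, 3k}` then `tr O² = 0` and `|tr O⁴| = d`; in all remaining cases
`tr O² = 0` and `tr O⁴ = 0`. -/
theorem trace_sq_fourth_of_four_mul (d k : ℕ) [NeZero d] (hd : d = 4 * k)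
    (hk : 1 ≤ k) (l m : ℕ) (hl : l < d) (hm : m < d) (hne : (l, m) ≠ (0, 0)) :
    (((l = 0 ∨ l = 2 * k) ∧ (m = 0 ∨ m = 2 * k)) →
        (((pauliX d ^ l * pauliZ d ^ m) ^ 2).trace ^ 2 = (d : ℂ) ^ 2 ∧
         ‖((pauliX d ^ l * pauliZ d ^ m) ^ 4).trace‖ = d)) ∧
    ((¬((l = 0 ∨ l = 2 * k) ∧ (m = 0 ∨ m = 2 * k)) ∧
      (l = 0 ∨ l = k ∨ l = 2 * k ∨ l = 3 * k) ∧
      (m = 0 ∨ m = k ∨ m = 2 * k ∨ m = 3 * k)) →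
        (((pauliX d ^ l * pauliZ d ^ m) ^ 2).trace = 0 ∧
         ‖((pauliX d ^ l * pauliZ d ^ m) ^ 4).trace‖ = d)) ∧
    (¬((l = 0 ∨ l = k ∨ l = 2 * k ∨ l = 3 * k) ∧
       (m = 0 ∨ m = k ∨ m = 2 * k ∨ m = 3 * k)) →
        (((pauliX d ^ l * pauliZ d ^ m) ^ 2).trace = 0 ∧
         ((pauliX d ^ l * pauliZ d ^ m) ^ 4).trace = 0)) :=
  trace_sq_fourth_of_four_mul_general d k hd l m hl hm
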